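/- Let F be a finite field and n ≥ 1. If E ⊆ F^n is such that for every x ∈ F^n \ E there exists a line γ through x with γ \ {x} ⊆ E, then |E| ≥ c_n |F|^n for a constant c_n > 0 depending only on n (Nikodym set bound over finite fields). -/

import Mathlib

/-!
Dvir's polynomial method. If `|E| < (m + 1)ⁿ`, a dimension count gives a nonzero polynomial with
all individual degrees `≤ m` vanishing on `E`. When `n m ≤ q - 2`, its restriction to a line
through a point `x ∉ E` given by the Nikodym property has degree `< q - 1` and vanishes at the
`q - 1` points of the line other than `x`, so it vanishes at `x` too. Hence it vanishes on all of
`Fⁿ`, which is impossible since its individual degrees are `< q`. Taking `m = ⌊(q - 2) / n⌋`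
gives `|E| ≥ (q / 2n)ⁿ`.
-/

open Polynomial

def IsNikodymSet (F : Type*) {V : Type*} [Field F] [AddCommGroup V] [Module F V] (E : Set V) :
    Prop :=
  ∀ x ∉ E, ∃ v ≠ 0, ∀ t : F, t ≠ 0 → x + t • v ∈ E

namespace MvPolynomial

variable {σ R : Type*}

section CommSemiring

variable [CommSemiring R]

theorem natDegree_aeval_le_totalDegree {f : σ → R[X]} (hf : ∀ i, (f i).natDegree ≤ 1)
    (P : MvPolynomial σ R) : (aeval f P).natDegree ≤ P.totalDegree := by
  conv_lhs => rw [P.as_sum, map_sum]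
  refine natDegree_sum_le_of_forall_le _ _ fun s hs => ?_
  have hprod : (s.prod fun i k => f i ^ k).natDegree ≤ s.sum fun _ k => k :=
    (natDegree_prod_le _ _).trans <| Finset.sum_le_sum fun i _ =>
      natDegree_pow_le.trans <| (Nat.mul_le_mul_left _ (hf i)).trans_eq (mul_one _)
  rw [aeval_monomial]
  calc _ ≤ (algebraMap R R[X] (P.coeff s)).natDegree + (s.prod fun i k => f i ^ k).natDegree :=
        natDegree_mul_le
    _ ≤ 0 + s.sum fun _ k => k := by gcongr; simp
    _ ≤ P.totalDegree := by simpa using le_totalDegree hs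

noncomputable def restrictLine (P : MvPolynomial σ R) (x v : σ → R) : R[X] :=
  aeval (fun i => Polynomial.C (x i) + Polynomial.C (v i) * Polynomial.X) P

theorem eval_restrictLine (P : MvPolynomial σ R) (x v : σ → R) (t : R) :
    (P.restrictLine x v).eval t = eval (x + t • v) P := by
  rw [restrictLine, aeval_def, polynomial_eval_eval₂]
  congr 1
  · ext; simp
  · funext i
    simp only [Polynomial.eval_add, Polynomial.eval_C, Polynomial.eval_mul, Polynomial.eval_X,
      Pi.add_apply, Pi.smul_apply, smul_eq_mul, mul_comm]

theorem natDegree_restrictLine_le (P : MvPolynomial σ R) (x v : σ → R) :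
    (P.restrictLine x v).natDegree ≤ P.totalDegree :=
  natDegree_aeval_le_totalDegree (fun _ => natDegree_add_le_of_degree_le
    ((natDegree_C _).trans_le zero_le_one) ((natDegree_C_mul_le _ _).trans natDegree_X_le)) P

theorem totalDegree_le_of_mem_restrictDegree [Fintype σ] {P : MvPolynomial σ R} {m : ℕ}
    (hP : P ∈ restrictDegree σ R m) : P.totalDegree ≤ Fintype.card σ * m := by
  rw [mem_restrictDegree] at hP
  refine Finset.sup_le fun s hs => ?_
  calc (s.sum fun _ k => k) = ∑ i, s i := Finsupp.sum_fintype _ _ (fun _ => rfl)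
    _ ≤ ∑ _i : σ, m := Finset.sum_le_sum fun i _ => hP s hs i
    _ = Fintype.card σ * m := by simp

theorem finrank_restrictDegree [Fintype σ] [StrongRankCondition R] (m : ℕ) :
    Module.finrank R (restrictDegree σ R m) = (m + 1) ^ Fintype.card σ := by
  let b : Module.Basis {s : σ →₀ ℕ | ∀ i, s i ≤ m} R (restrictDegree σ R m) :=
    basisRestrictSupport R _
  let e : {s : σ →₀ ℕ | ∀ i, s i ≤ m} ≃ (σ → Set.Iic m) :=
    (Finsupp.equivFunOnFinite.subtypeEquiv (q := fun f => ∀ i, f i ≤ m) fun _ => Iff.rfl).trans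
      (Equiv.subtypePiEquivPi (β := fun _ => ℕ) (p := fun _ k => k ≤ m))
  rw [Module.finrank_eq_nat_card_basis b, Nat.card_congr e, Nat.card_fun]
  simp

end CommSemiring

theorem eval_eq_zero_of_forall_eval_add_smul_eq_zero {F : Type*} [Field F] [Fintype F]
    {P : MvPolynomial σ F} (hP : P.totalDegree + 1 < Fintype.card F) {x v : σ → F}
    (hline : ∀ t : F, t ≠ 0 → eval (x + t • v) P = 0) : eval x P = 0 := by
  classical
  have hzero : P.restrictLine x v = 0 := by
    refine eq_zero_of_natDegree_lt_card_of_eval_eq_zero' _ (Finset.univ.erase 0)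
      (fun t ht => ?_) ?_
    · rw [eval_restrictLine]
      exact hline t (Finset.ne_of_mem_erase ht)
    · rw [Finset.card_erase_of_mem (Finset.mem_univ 0), Finset.card_univ]
      have := natDegree_restrictLine_le P x v
      omega
  simpa [eval_restrictLine] using congr_arg (Polynomial.eval 0) hzero

end MvPolynomial

namespace IsNikodymSet

open MvPolynomial

universe u

-- `MvPolynomial.eq_zero_of_eval_eq_zero` needs `σ` and `F` in the same universe.
variable {σ F : Type u} [Field F] [Fintype F] {E : Set (σ → F)}

theorem eq_zero_of_eval_eq_zero [Finite σ] (hE : IsNikodymSet F E) {P : MvPolynomial σ F}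
    (hP : P.totalDegree + 1 < Fintype.card F) (hPE : ∀ x ∈ E, eval x P = 0) : P = 0 := by
  have hP' : P ∈ restrictDegree σ F (Fintype.card F - 1) :=
    restrictTotalDegree_le_restrictDegree σ F _ <| (mem_restrictTotalDegree _ _ _).2 (by omega)
  refine MvPolynomial.eq_zero_of_eval_eq_zero _ _ P (fun x => ?_) hP'
  by_cases hx : x ∈ E
  · exact hPE x hx
  obtain ⟨v, -, hv⟩ := hE x hx
  exact eval_eq_zero_of_forall_eval_add_smul_eq_zero hP fun t ht => hPE _ (hv t ht)

theorem pow_le_ncard [Fintype σ] (hE : IsNikodymSet F E) {m : ℕ}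
    (hm : Fintype.card σ * m + 1 < Fintype.card F) : (m + 1) ^ Fintype.card σ ≤ E.ncard := by
  classical
  let L :=
    LinearMap.funLeft F F ((↑) : E → σ → F) ∘ₗ evalₗ F σ ∘ₗ (restrictDegree σ F m).subtype
  have hL : Function.Injective L := by
    rw [← LinearMap.ker_eq_bot, LinearMap.ker_eq_bot']
    intro P hP
    exact Subtype.ext <| hE.eq_zero_of_eval_eq_zero
      ((Nat.add_le_add_right (totalDegree_le_of_mem_restrictDegree P.2) 1).trans_lt hm)
      fun x hx => congrFun hP ⟨x, hx⟩
  calc (m + 1) ^ Fintype.card σ = Module.finrank F (restrictDegree σ F m) :=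
        (finrank_restrictDegree m).symm
    _ ≤ Module.finrank F (E → F) := LinearMap.finrank_le_finrank_of_injective hL
    _ = E.ncard := by
      rw [Module.finrank_fintype_fun_eq_card, ← Nat.card_eq_fintype_card, Nat.card_coe_set_eq]

end IsNikodymSet

/-- **Nikodym set bound over finite fields**: if for every `x ∈ F^n \ E` there is a line
`γ` through `x` with `γ \ {x} ⊆ E`, then `|E| ≥ c_n |F|^n`. -/
theorem nikodym_set_bound (n : ℕ) (hn : 1 ≤ n) :
    ∃ c : ℝ, 0 < c ∧ ∀ (F : Type) [Field F] [Fintype F], ∀ E : Set (Fin n → F),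
      (∀ x : Fin n → F, x ∉ E →
        ∃ v : Fin n → F, v ≠ 0 ∧ ∀ t : F, t ≠ 0 → x + t • v ∈ E) →
      c * (Fintype.card F : ℝ) ^ n ≤ E.ncard := by
  refine ⟨(2 * n : ℝ)⁻¹ ^ n, by positivity, fun F _ _ E hE => ?_⟩
  set q := Fintype.card F
  set m := (q - 2) / n
  have hq : 2 ≤ q := Fintype.one_lt_card
  have hm_le : n * m ≤ q - 2 := Nat.mul_div_le _ _
  have hm_lt : q - 2 < n * (m + 1) := Nat.lt_mul_div_succ _ hn
  have hcard : (m + 1) ^ n ≤ E.ncard := by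
    simpa using IsNikodymSet.pow_le_ncard (m := m) hE (by simp only [Fintype.card_fin]; omega)
  have hqm : q ≤ 2 * (n * (m + 1)) := by omega
  have hbase : (q : ℝ) / (2 * n) ≤ (m + 1 : ℕ) := by
    rw [div_le_iff₀ (by positivity)]
    exact_mod_cast hqm.trans_eq (by ring)
  calc (2 * n : ℝ)⁻¹ ^ n * q ^ n = (q / (2 * n)) ^ n := by ring
    _ ≤ ((m + 1 : ℕ) : ℝ) ^ n := by gcongr
    _ ≤ E.ncard := by exact_mod_cast hcard
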